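/- arXiv:0804.4264 — 2 statements merged into one kernel-verified Lean document; each statement's English description precedes it below -/
import Mathlib

section
/- Let m ≥ 5 and let π: G1 → A_m be a minimal cover of finite groups. Then the only subgroup of G1 of index strictly less than m is G1 itself. -/
/-!
A finite simple group acts faithfully on the cosets of any proper subgroup, so a proper subgroup
of index `k` forces `|G| ≤ k!`. Since `|A_m| = m!/2 > (m-1)!`, every proper subgroup of `A_m`
has index at least `m` once `A_m` is simple, i.e. for `m ≥ 5`. A subgroup `H` of index `< m` in a
minimal cover maps onto a subgroup of `A_m` of index dividing that of `H`, hence onto `A_m`, and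
minimality gives `H = ⊤`.
-/

open Nat

namespace Subgroup

variable {G : Type*} [Group G]

theorem index_normalCore_dvd_factorial_index (H : Subgroup G) [H.FiniteIndex] :
    H.normalCore.index ∣ H.index ! := by
  rw [normalCore_eq_ker, index_ker, index_eq_card, ← Nat.card_perm]
  exact card_subgroup_dvd_card _

theorem eq_top_of_factorial_index_lt_card [IsSimpleGroup G] [Finite G] (H : Subgroup G)
    (h : H.index ! < Nat.card G) : H = ⊤ := by
  rcases H.normalCore_normal.eq_bot_or_eq_top with hbot | htop
  · have hdvd := H.index_normalCore_dvd_factorial_index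
    rw [hbot, index_bot] at hdvd
    exact absurd (Nat.le_of_dvd H.index.factorial_pos hdvd) h.not_ge
  · exact top_le_iff.mp (htop ▸ H.normalCore_le)

end Subgroup

namespace alternatingGroup

variable {α : Type*} [Fintype α] [DecidableEq α]

theorem eq_top_of_index_lt_card (hα : 5 ≤ Nat.card α) (H : Subgroup (alternatingGroup α))
    (h : H.index < Nat.card α) : H = ⊤ := by
  have : IsSimpleGroup (alternatingGroup α) := isSimpleGroup hα
  have : Nontrivial α := Finite.one_lt_card_iff_nontrivial.mp (by omega)
  apply H.eq_top_of_factorial_index_lt_card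
  have hcard : 2 * Nat.card (alternatingGroup α) = Nat.card α * (Nat.card α - 1)! := by
    rw [two_mul_nat_card_alternatingGroup, Nat.card_perm, mul_factorial_pred (by omega)]
  have hindex : H.index ! ≤ (Nat.card α - 1)! := factorial_le (by omega)
  nlinarith [factorial_pos (Nat.card α - 1)]

end alternatingGroup

theorem minimal_cover_of_alternating_no_small_index_subgroup
    (m : ℕ) (hm : 5 ≤ m) {G1 : Type*} [Group G1] [Finite G1]
    (π : G1 →* alternatingGroup (Fin m)) (hsurj : Function.Surjective π)
    (hmin : ∀ H : Subgroup G1, Subgroup.map π H = ⊤ → H = ⊤)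
    (H : Subgroup G1) (h : H.index < m) :
    H = ⊤ := by
  apply hmin
  have hindex : (H.map π).index ≤ H.index :=
    Nat.le_of_dvd (Nat.pos_of_ne_zero H.index_ne_zero_of_finite) (H.index_map_dvd hsurj)
  exact alternatingGroup.eq_top_of_index_lt_card (by simpa using hm) _
    (by simpa using hindex.trans_lt h)
end

section
/- Let K be a field, n ≥ 7, h(x) ∈ K[x] an irreducible separable polynomial of degree n−1 whose Galois group over K, viewed as a permutation group of its root set R_h, is either the full symmetric group or the alternating group on R_h. Then the only fractional-linear transformation U ∈ PGL_2(K̄) with U(R_h) = R_h is the identity. -/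
/-!
A fractional linear map is determined by its values at three points, so the permutations of
`R_h` induced by fractional linear maps form a subgroup `G` in which only the identity fixes
three roots. Galois automorphisms act on coefficients, so conjugating by an even permutation of
`R_h` (which the Galois group realises) preserves `G`. Hence `G ⊓ A` is normal in the simple
group `A = alternatingGroup R_h`; it cannot be all of `A`, which contains a 3-cycle fixing the
other `≥ 3` roots, so it is trivial. Then every commutator `⁅τ, g⁆` with `τ ∈ A`, `g ∈ G` is an
even element of `G`, hence trivial, and an element of `G` centralising `A` is the identity.
-/

open Equiv Finset
open scoped commutatorElement

namespace Equiv.Perm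

variable {α : Type*} [DecidableEq α] [Fintype α]

theorem eq_one_of_forall_commute_alternatingGroup (hα : 4 ≤ Fintype.card α) {g : Perm α}
    (hg : ∀ τ ∈ alternatingGroup α, Commute τ g) : g = 1 := by
  by_contra hg1
  obtain ⟨x, hx⟩ : ∃ x, g x ≠ x := by
    by_contra! h
    exact hg1 (Equiv.ext h)
  have hcard : 1 < #({x, g x}ᶜ : Finset α) := by
    rw [card_compl, card_pair hx.symm]
    omega
  obtain ⟨z, hz, w, hw, hzw⟩ := Finset.one_lt_card.mp hcard
  simp only [mem_compl, mem_insert, mem_singleton, not_or] at hz hw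
  -- The 3-cycle `x ↦ w ↦ z ↦ x` fixes `g x`, so commuting with it forces `g w = g x`.
  have hc := isThreeCycle_swap_mul_swap_same (Ne.symm hz.1) (Ne.symm hw.1) hzw
  have hcx : (swap x z * swap x w) x = w := by
    rw [Perm.mul_apply, swap_apply_left, swap_apply_of_ne_of_ne hw.1 (Ne.symm hzw)]
  have hcgx : (swap x z * swap x w) (g x) = g x := by
    rw [Perm.mul_apply, swap_apply_of_ne_of_ne hx (Ne.symm hw.2),
      swap_apply_of_ne_of_ne hx (Ne.symm hz.2)]
  have : g w = g x := by
    rw [← hcx, ← Perm.mul_apply, ← (hg _ hc.mem_alternatingGroup).eq, Perm.mul_apply, hcgx]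
  exact hw.1 (g.injective this)

theorem subgroup_eq_bot_of_alternatingGroup_le_normalizer (hα : 6 ≤ Fintype.card α)
    {H : Subgroup (Perm α)}
    (hnorm : alternatingGroup α ≤ Subgroup.normalizer (H : Set (Perm α)))
    (hfix : ∀ g ∈ H, 2 < #g.supportᶜ → g = 1) : H = ⊥ := by
  have hnormal : (H.subgroupOf (alternatingGroup α)).Normal :=
    Subgroup.normal_subgroupOf_iff_le_normalizer_inf.mpr
      ((le_inf hnorm (alternatingGroup α).le_normalizer).trans
        Subgroup.inf_normalizer_le_normalizer_inf)
  have hdisj : _root_.Disjoint H (alternatingGroup α) := by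
    rcases alternatingGroup.normal_subgroup_eq_bot_or_eq_top
      (by rw [Nat.card_eq_fintype_card]; omega) (N := H.subgroupOf _) with h | h
    · exact Subgroup.subgroupOf_eq_bot.mp h
    · obtain ⟨a, b, c, hab, hac, hbc⟩ := (Fintype.two_lt_card_iff (α := α)).mp (by omega)
      have h3 := isThreeCycle_swap_mul_swap_same hab hac hbc
      refine absurd (hfix _ (Subgroup.subgroupOf_eq_top.mp h h3.mem_alternatingGroup) ?_)
        h3.ne_one
      rw [card_compl, h3.card_support]
      omega
  refine (Subgroup.eq_bot_iff_forall H).mpr fun g hg => ?_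
  refine eq_one_of_forall_commute_alternatingGroup (by omega) fun τ hτ => ?_
  have hmem : ⁅τ, g⁆ ∈ H ⊓ alternatingGroup α := by
    refine Subgroup.mem_inf.mpr
      ⟨H.mul_mem ((Subgroup.mem_normalizer_iff.mp (hnorm hτ) g).mp hg) (H.inv_mem hg), ?_⟩
    rw [mem_alternatingGroup, map_commutatorElement,
      commutatorElement_eq_one_iff_commute]
    exact Commute.all _ _
  rw [hdisj.eq_bot, Subgroup.mem_bot, commutatorElement_eq_one_iff_commute] at hmem
  exact hmem

end Equiv.Perm

section FractionalLinear

variable {F : Type*} [Field F]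

theorem fractionalLinear_coeffs_of_three_fixedPoints {a b c d x y z : F}
    (hxy : x ≠ y) (hxz : x ≠ z) (hyz : y ≠ z)
    (hx : a * x + b = x * (c * x + d)) (hy : a * y + b = y * (c * y + d))
    (hz : a * z + b = z * (c * z + d)) : c = 0 ∧ b = 0 ∧ a = d := by
  have hxy' : c * (x + y) + (d - a) = 0 :=
    (mul_eq_zero.mp (by linear_combination hy - hx : (x - y) * (c * (x + y) + (d - a)) = 0)
      ).resolve_left (sub_ne_zero.mpr hxy)
  have hxz' : c * (x + z) + (d - a) = 0 :=
    (mul_eq_zero.mp (by linear_combination hz - hx : (x - z) * (c * (x + z) + (d - a)) = 0)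
      ).resolve_left (sub_ne_zero.mpr hxz)
  have hc : c = 0 :=
    (mul_eq_zero.mp (by linear_combination hxy' - hxz' : (y - z) * c = 0)).resolve_left
      (sub_ne_zero.mpr hyz)
  have had : a = d := by linear_combination (x + y) * hc - hxy'
  exact ⟨hc, by linear_combination hx + x ^ 2 * hc - x * had, had⟩

def fractionalLinearPerms (R : Finset F) : Subgroup (Perm R) where
  carrier := {g | ∃ a b c d : F, a * d - b * c ≠ 0 ∧
    ∀ x : R, c * x + d ≠ 0 ∧ (a * x + b) / (c * x + d) = g x}
  one_mem' := ⟨1, 0, 0, 1, by norm_num, fun x => by simp⟩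
  mul_mem' := by
    rintro g₁ g₂ ⟨a₁, b₁, c₁, d₁, hdet₁, hg₁⟩ ⟨a₂, b₂, c₂, d₂, hdet₂, hg₂⟩
    refine ⟨a₁ * a₂ + b₁ * c₂, a₁ * b₂ + b₁ * d₂, c₁ * a₂ + d₁ * c₂, c₁ * b₂ + d₁ * d₂,
      fun h => mul_ne_zero hdet₁ hdet₂ (by linear_combination h), fun x => ?_⟩
    obtain ⟨hden₂, hval₂⟩ := hg₂ x
    obtain ⟨hden₁, hval₁⟩ := hg₁ (g₂ x)
    have hcross := (div_eq_iff hden₂).mp hval₂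
    have hden : (c₁ * a₂ + d₁ * c₂) * x + (c₁ * b₂ + d₁ * d₂)
        = (c₁ * (g₂ x : F) + d₁) * (c₂ * x + d₂) := by linear_combination c₁ * hcross
    have hnum : (a₁ * a₂ + b₁ * c₂) * x + (a₁ * b₂ + b₁ * d₂)
        = (a₁ * (g₂ x : F) + b₁) * (c₂ * x + d₂) := by linear_combination a₁ * hcross
    rw [hden, hnum, mul_div_mul_right _ _ hden₂]
    exact ⟨mul_ne_zero hden₁ hden₂, hval₁⟩
  inv_mem' := by
    rintro g ⟨a, b, c, d, hdet, hg⟩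
    refine ⟨d, -b, -c, a, fun h => hdet (by linear_combination h), fun x => ?_⟩
    obtain ⟨hden, hval⟩ := hg (g⁻¹ x)
    rw [show g (g⁻¹ x) = x from g.apply_symm_apply x] at hval
    have hcross := (div_eq_iff hden).mp hval
    have hden' : -c * x + a ≠ 0 := fun h0 =>
      hdet (by linear_combination (c * (g⁻¹ x : F) + d) * h0 - c * hcross)
    exact ⟨hden', (div_eq_iff hden').mpr (by linear_combination -hcross)⟩

variable {R : Finset F}

theorem exists_mem_fractionalLinearPerms {a b c d : F} (hdet : a * d - b * c ≠ 0)
    (hmap : ∀ x ∈ R, c * x + d ≠ 0 ∧ (a * x + b) / (c * x + d) ∈ R) :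
    ∃ g ∈ fractionalLinearPerms R, ∀ x : R, (g x : F) = (a * x + b) / (c * x + d) := by
  let f : R → R := fun x => ⟨(a * x + b) / (c * x + d), (hmap x x.2).2⟩
  have hf : Function.Injective f := by
    intro x y hxy
    have hval := (div_eq_div_iff (hmap x x.2).1 (hmap y y.2).1).mp (congrArg Subtype.val hxy)
    have : (a * d - b * c) * ((x : F) - y) = 0 := by linear_combination hval
    exact Subtype.ext (sub_eq_zero.mp ((mul_eq_zero.mp this).resolve_left hdet))
  exact ⟨Equiv.ofBijective f (Finite.injective_iff_bijective.mp hf),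
    ⟨a, b, c, d, hdet, fun x => ⟨(hmap x x.2).1, rfl⟩⟩, fun x => rfl⟩

theorem eq_one_of_mem_fractionalLinearPerms [DecidableEq R] {g : Perm R}
    (hg : g ∈ fractionalLinearPerms R) (hfix : 2 < #g.supportᶜ) : g = 1 := by
  obtain ⟨a, b, c, d, hdet, hval⟩ := hg
  have hcross : ∀ x : R, g x = x → a * x + b = x * (c * x + d) := fun x hx =>
    (div_eq_iff (hval x).1).mp ((hval x).2.trans (congrArg Subtype.val hx))
  obtain ⟨x, hx, y, hy, z, hz, hxy, hxz, hyz⟩ := Finset.two_lt_card.mp hfix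
  simp only [mem_compl, Perm.mem_support, not_not] at hx hy hz
  obtain ⟨rfl, rfl, rfl⟩ := fractionalLinear_coeffs_of_three_fixedPoints
    (Subtype.coe_ne_coe.mpr hxy) (Subtype.coe_ne_coe.mpr hxz) (Subtype.coe_ne_coe.mpr hyz)
    (hcross x hx) (hcross y hy) (hcross z hz)
  have ha : a ≠ 0 := fun h => hdet (by simp [h])
  ext w
  simpa [ha] using ((hval w).2).symm

theorem conj_mem_fractionalLinearPerms (σ : F ≃+* F) {τ : Perm R}
    (hσ : ∀ x : R, σ x = τ x) {g : Perm R} (hg : g ∈ fractionalLinearPerms R) :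
    τ * g * τ⁻¹ ∈ fractionalLinearPerms R := by
  obtain ⟨a, b, c, d, hdet, hval⟩ := hg
  refine ⟨σ a, σ b, σ c, σ d, ?_, fun x => ?_⟩
  · simpa only [map_sub, map_mul] using (map_ne_zero σ).mpr hdet
  · obtain ⟨hden, hx⟩ := hval (τ⁻¹ x)
    have hσx : σ (τ⁻¹ x) = x := by rw [hσ]; simp
    refine ⟨?_, ?_⟩
    · have := (map_ne_zero σ).mpr hden
      rwa [map_add, map_mul, hσx] at this
    · have := congrArg σ hx
      rwa [map_div₀, map_add, map_add, map_mul, map_mul, hσx, hσ] at this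

theorem mem_normalizer_fractionalLinearPerms (σ : F ≃+* F) {τ : Perm R}
    (hσ : ∀ x : R, σ x = τ x) :
    τ ∈ Subgroup.normalizer (fractionalLinearPerms R : Set (Perm R)) := by
  have hσ' : ∀ x : R, σ.symm x = τ⁻¹ x := fun x =>
    σ.symm_apply_eq.mpr (by rw [hσ]; simp)
  refine Subgroup.mem_normalizer_iff.mpr fun g =>
    ⟨conj_mem_fractionalLinearPerms σ hσ, fun hg => ?_⟩
  simpa [mul_assoc] using conj_mem_fractionalLinearPerms σ.symm hσ' hg

end FractionalLinear

open scoped Classical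

theorem no_nontrivial_fractional_linear_stabilizer_of_roots_general
    {K : Type*} [Field K] (n : ℕ) (hn : 7 ≤ n)
    (h : Polynomial K) (hsep : h.Separable)
    (hdeg : h.natDegree = n - 1)
    (R : Finset (AlgebraicClosure K))
    (hR : ∀ x : AlgebraicClosure K, x ∈ R ↔ Polynomial.aeval x h = 0)
    (hgal : ∀ π : Equiv.Perm {x // x ∈ R}, Equiv.Perm.sign π = 1 →
      ∃ σ : AlgebraicClosure K ≃ₐ[K] AlgebraicClosure K,
        ∀ α : {x // x ∈ R}, σ (α : AlgebraicClosure K) = (π α : AlgebraicClosure K))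
    (a b c d : AlgebraicClosure K) (hdet : a * d - b * c ≠ 0)
    (hmap : ∀ α ∈ R, c * α + d ≠ 0 ∧ (a * α + b) / (c * α + d) ∈ R) :
    c = 0 ∧ b = 0 ∧ a = d := by
  have hcard : Fintype.card R = n - 1 := by
    have hroots : ∀ x, x ∈ R ↔ x ∈ h.rootSet (AlgebraicClosure K) := fun x => by
      rw [hR, Polynomial.mem_rootSet, and_iff_right hsep.ne_zero]
    rw [Fintype.card_congr (Equiv.subtypeEquivRight hroots), ← hdeg]
    exact Polynomial.card_rootSet_eq_natDegree hsep (IsAlgClosed.splits _)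
  have hbot : fractionalLinearPerms R = ⊥ :=
    Perm.subgroup_eq_bot_of_alternatingGroup_le_normalizer (by omega)
      (fun τ hτ => (hgal τ hτ).elim fun σ hσ =>
        mem_normalizer_fractionalLinearPerms σ.toRingEquiv hσ)
      fun _ => eq_one_of_mem_fractionalLinearPerms
  obtain ⟨g, hgG, hg⟩ := exists_mem_fractionalLinearPerms hdet hmap
  rw [hbot, Subgroup.mem_bot] at hgG
  have hfix : ∀ x : R, a * x + b = x * (c * x + d) := fun x =>
    (div_eq_iff (hmap x x.2).1).mp (by rw [← hg, hgG, Perm.one_apply])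
  obtain ⟨x, y, z, hxy, hxz, hyz⟩ := (Fintype.two_lt_card_iff (α := R)).mp (by omega)
  exact fractionalLinear_coeffs_of_three_fixedPoints (Subtype.coe_ne_coe.mpr hxy)
    (Subtype.coe_ne_coe.mpr hxz) (Subtype.coe_ne_coe.mpr hyz) (hfix x) (hfix y) (hfix z)

theorem no_nontrivial_fractional_linear_stabilizer_of_roots
    {K : Type*} [Field K] (n : ℕ) (hn : 7 ≤ n)
    (h : Polynomial K) (hirr : Irreducible h) (hsep : h.Separable)
    (hdeg : h.natDegree = n - 1)
    (R : Finset (AlgebraicClosure K))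
    (hR : ∀ x : AlgebraicClosure K, x ∈ R ↔ Polynomial.aeval x h = 0)
    (hgal : ∀ π : Equiv.Perm {x // x ∈ R}, Equiv.Perm.sign π = 1 →
      ∃ σ : AlgebraicClosure K ≃ₐ[K] AlgebraicClosure K,
        ∀ α : {x // x ∈ R}, σ (α : AlgebraicClosure K) = (π α : AlgebraicClosure K))
    (a b c d : AlgebraicClosure K) (hdet : a * d - b * c ≠ 0)
    (hmap : ∀ α ∈ R, c * α + d ≠ 0 ∧ (a * α + b) / (c * α + d) ∈ R) :
    c = 0 ∧ b = 0 ∧ a = d :=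
  no_nontrivial_fractional_linear_stabilizer_of_roots_general n hn h hsep hdeg R hR hgal a b c d
    hdet hmap
end
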